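/- Let b₁,…,b_r ∈ ℤ^n and let σ = {x ∈ ℝ^n : ⟨b_i,x⟩ ≥ 0 for i = 1,…,r}. Assume σ spans ℝ^n as a real vector space (σ is n-dimensional with apex 0). Then σ^∨ = Cone(b₁,…,b_r), i.e., the dual cone of σ equals the set of all nonnegative real linear combinations of b₁,…,b_r. -/

import Mathlib

open Finset

/-- The canonical map `ℤ^n → ℝ^n`. -/
def coeR {n : ℕ} (x : Fin n → ℤ) : Fin n → ℝ := fun i => (x i : ℝ)

/-- The standard inner product on `ℝ^n`. -/
def innerR {n : ℕ} (m x : Fin n → ℝ) : ℝ := ∑ i, m i * x i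

/-- The cone of all nonnegative real combinations of the integer vectors `b i`. -/
def ratCone {n r : ℕ} (b : Fin r → Fin n → ℤ) : Set (Fin n → ℝ) :=
  {x | ∃ lam : Fin r → ℝ, (∀ i, 0 ≤ lam i) ∧ x = ∑ i, lam i • coeR (b i)}

/-- The dual cone of a subset of `ℝ^n`. -/
def dualCone {n : ℕ} (σ : Set (Fin n → ℝ)) : Set (Fin n → ℝ) :=
  {m | ∀ u ∈ σ, 0 ≤ innerR m u}

/-! `σ` is the dual of the finite set `{b i}`, so `σ^∨` is the double dual of `Cone(b)`, and
Hahn–Banach separation returns `Cone(b)` provided it is closed. Closedness comes from conic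
Carathéodory: `Cone(b)` is a finite union of cones over linearly independent subfamilies, and
each of these is the image of the closed orthant under an injective, hence closed, linear map. -/

open Set PointedCone

section ConicCombinations

variable {E : Type*} [AddCommGroup E] [Module ℝ E]

lemma mem_hull_range_iff {ι : Type*} [Fintype ι] {v : ι → E} {x : E} :
    x ∈ hull ℝ (range v) ↔ ∃ lam : ι → ℝ, (∀ i, 0 ≤ lam i) ∧ x = ∑ i, lam i • v i := by
  rw [Submodule.mem_span_range_iff_exists_fun]
  constructor
  · rintro ⟨c, rfl⟩
    exact ⟨fun i => c i, fun i => (c i).2, rfl⟩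
  · rintro ⟨lam, hlam, rfl⟩
    exact ⟨fun i => ⟨lam i, hlam i⟩, rfl⟩

/-- Conic Carathéodory: move `lam` along a linear relation `∑ c i • v i = 0` until its first
coefficient vanishes, namely one minimising `lam j / c j` over `c j > 0`. -/
lemma exists_succAbove_of_not_linearIndependent {r : ℕ} {v : Fin (r + 1) → E}
    (hv : ¬LinearIndependent ℝ v) {lam : Fin (r + 1) → ℝ} (hlam : ∀ i, 0 ≤ lam i) :
    ∃ j : Fin (r + 1), ∃ μ : Fin r → ℝ,
      (∀ i, 0 ≤ μ i) ∧ ∑ i, lam i • v i = ∑ i, μ i • v (j.succAbove i) := by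
  obtain ⟨c, hc, i₀, hci₀⟩ : ∃ c : Fin (r + 1) → ℝ, ∑ i, c i • v i = 0 ∧ ∃ i, 0 < c i := by
    obtain ⟨c, hc, i₀, hci₀⟩ := Fintype.not_linearIndependent_iff.mp hv
    rcases hci₀.lt_or_gt with hneg | hpos
    · exact ⟨-c, by simp [neg_smul, hc], i₀, by simpa using hneg⟩
    · exact ⟨c, hc, i₀, hpos⟩
  obtain ⟨j, hj, hmin⟩ := (Finset.univ.filter fun i => 0 < c i).exists_min_image
    (fun i => lam i / c i) ⟨i₀, by simp [hci₀]⟩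
  have hcj : 0 < c j := (Finset.mem_filter.mp hj).2
  set t := lam j / c j
  have ht : 0 ≤ t := div_nonneg (hlam j) hcj.le
  have hnonneg : ∀ i, 0 ≤ lam i - t * c i := by
    intro i
    rcases le_or_gt (c i) 0 with hci | hci
    · nlinarith [hlam i]
    · have := (le_div_iff₀ hci).mp (hmin i (by simp [hci]))
      linarith
  have hsum : ∑ i, lam i • v i = ∑ i, (lam i - t * c i) • v i := by
    simp only [sub_smul, Finset.sum_sub_distrib, mul_smul, ← Finset.smul_sum, hc, smul_zero,
      sub_zero]
  refine ⟨j, fun i => lam (j.succAbove i) - t * c (j.succAbove i), fun i => hnonneg _, ?_⟩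
  rw [hsum, Fin.sum_univ_succAbove _ j, div_mul_cancel₀ _ hcj.ne', sub_self, zero_smul, zero_add]

lemma coe_hull_range_eq_iUnion_succAbove {r : ℕ} {v : Fin (r + 1) → E}
    (hv : ¬LinearIndependent ℝ v) :
    (hull ℝ (range v) : Set E) = ⋃ j : Fin (r + 1), (hull ℝ (range (v ∘ j.succAbove)) : Set E) := by
  refine subset_antisymm ?_
    (iUnion_subset fun j => Submodule.span_mono (range_comp_subset_range j.succAbove v))
  intro x hx
  obtain ⟨lam, hlam, rfl⟩ := mem_hull_range_iff.mp hx
  obtain ⟨j, μ, hμ, hsum⟩ := exists_succAbove_of_not_linearIndependent hv hlam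
  exact mem_iUnion.mpr ⟨j, mem_hull_range_iff.mpr ⟨μ, hμ, hsum⟩⟩

variable [TopologicalSpace E] [IsTopologicalAddGroup E] [ContinuousSMul ℝ E] [T2Space E]

lemma isClosed_hull_range_of_linearIndependent {ι : Type*} [Fintype ι] {v : ι → E}
    (hv : LinearIndependent ℝ v) : IsClosed (hull ℝ (range v) : Set E) := by
  have hemb : Topology.IsClosedEmbedding (Fintype.linearCombination ℝ v) :=
    LinearMap.isClosedEmbedding_of_injective <| LinearMap.ker_eq_bot.mpr <|
      linearIndependent_iff_injective_fintypeLinearCombination.mp hv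
  have himage : (hull ℝ (range v) : Set E) = Fintype.linearCombination ℝ v '' Ici 0 := by
    ext x
    simp only [SetLike.mem_coe, mem_hull_range_iff, mem_image, Set.mem_Ici,
      Fintype.linearCombination_apply, Pi.le_def, Pi.zero_apply, eq_comm]
  rw [himage]
  exact hemb.isClosedMap _ isClosed_Ici

theorem isClosed_hull_range {r : ℕ} (v : Fin r → E) : IsClosed (hull ℝ (range v) : Set E) := by
  induction r with
  | zero => exact isClosed_hull_range_of_linearIndependent linearIndependent_empty_type
  | succ k ih =>
    by_cases hv : LinearIndependent ℝ v
    · exact isClosed_hull_range_of_linearIndependent hv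
    · rw [coe_hull_range_eq_iUnion_succAbove hv]
      exact isClosed_iUnion_of_finite fun j => ih _

theorem exists_dual_separating_of_notMem_hull_range [LocallyConvexSpace ℝ E] {r : ℕ}
    {v : Fin r → E} {x : E} (hx : x ∉ hull ℝ (range v)) :
    ∃ f : StrongDual ℝ E, (∀ i, 0 ≤ f (v i)) ∧ f x < 0 := by
  let C : ProperCone ℝ E := ⟨hull ℝ (range v), isClosed_hull_range v⟩
  obtain ⟨f, hfC, hfx⟩ := C.hyperplane_separation_point (x₀ := x) hx
  exact ⟨f, fun i => hfC _ (subset_hull (mem_range_self i)), hfx⟩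

end ConicCombinations

lemma innerR_eq_dotProduct {n : ℕ} (m x : Fin n → ℝ) : innerR m x = m ⬝ᵥ x := rfl

lemma ratCone_eq_hull {n r : ℕ} (b : Fin r → Fin n → ℤ) :
    ratCone b = (hull ℝ (range fun i => coeR (b i)) : Set (Fin n → ℝ)) := by
  ext x
  exact mem_hull_range_iff.symm

lemma StrongDual.apply_eq_innerR {n : ℕ} (f : StrongDual ℝ (Fin n → ℝ)) (x : Fin n → ℝ) :
    f x = innerR x (fun i => f fun j => if i = j then 1 else 0) :=
  f.toLinearMap.pi_apply_eq_sum_univ x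

theorem dual_of_halfspace_cone_general {n r : ℕ} (b : Fin r → Fin n → ℤ)
    (σ : Set (Fin n → ℝ)) (hσ : σ = {x | ∀ i, 0 ≤ innerR (coeR (b i)) x}) :
    dualCone σ = ratCone b := by
  subst hσ
  ext m
  constructor
  · intro hm
    by_contra hnot
    rw [ratCone_eq_hull] at hnot
    obtain ⟨f, hfb, hfm⟩ := exists_dual_separating_of_notMem_hull_range hnot
    have hu : (fun i => f fun j => if i = j then 1 else 0) ∈
        {x | ∀ i, 0 ≤ innerR (coeR (b i)) x} := fun i => f.apply_eq_innerR _ ▸ hfb i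
    exact (f.apply_eq_innerR m ▸ hfm).not_ge (hm _ hu)
  · rintro ⟨lam, hlam, rfl⟩ u hu
    simp only [innerR_eq_dotProduct, sum_dotProduct, smul_dotProduct, smul_eq_mul]
    exact Finset.sum_nonneg fun i _ => mul_nonneg (hlam i) (hu i)

/-- If `σ = {x : ⟨b i, x⟩ ≥ 0, i = 1,…,r}` with `b i ∈ ℤ^n` spans `ℝ^n` (i.e. `σ` is an
`n`-dimensional cone with apex `0`), then `σ^∨ = Cone(b₁,…,b_r)`. -/
theorem dual_of_halfspace_cone {n r : ℕ} (b : Fin r → Fin n → ℤ)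
    (σ : Set (Fin n → ℝ)) (hσ : σ = {x | ∀ i, 0 ≤ innerR (coeR (b i)) x})
    (hspan : Submodule.span ℝ σ = ⊤) :
    dualCone σ = ratCone b :=
  dual_of_halfspace_cone_general b σ hσ
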